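/- Let T be a finite tree with maximum degree at least 3, and let D be the orientation of T obtained by directing all edges away from a fixed leaf u (so every vertex other than u has in-degree exactly 1). Then D is not converse invariant: there exists a tournament T' with f_{T'}(D) ≠ f_{T'}(−D). In fact, D has exactly one source, with out-degree 1, and at least two sinks, so ∑_{sources v} 2^{d⁺(v)} < ∑_{sinks v} 2^{d⁻(v)}. -/

import Mathlib

open Finset Polynomial

/-- An oriented graph: loopless, at most one arc between any pair of vertices. -/
def IsOrgraph {V : Type*} (A : V → V → Prop) : Prop :=
  ∀ u v, A u v → u ≠ v ∧ ¬ A v u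

/-- A tournament: loopless, exactly one arc between any two distinct vertices. -/
def IsTournament {W : Type*} (B : W → W → Prop) : Prop :=
  (∀ v, ¬ B v v) ∧ ∀ u v, u ≠ v → (B u v ↔ ¬ B v u)

/-- The number of subdigraphs of `B` isomorphic to `A`: a subdigraph is a pair of a
vertex set and an arc relation contained in `B` with all endpoints in the vertex set. -/
noncomputable def copyCount {V W : Type*} (A : V → V → Prop) (B : W → W → Prop) : ℕ :=
  Nat.card {p : Set W × (W → W → Prop) //
    (∀ a b, p.2 a b → B a b ∧ a ∈ p.1 ∧ b ∈ p.1) ∧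
    ∃ e : V ≃ p.1, ∀ a b, A a b ↔ p.2 (e a : W) (e b : W)}

/-- `A` is converse invariant: every finite tournament contains as many copies of `A`
as of its converse. -/
def ConverseInvariant {V : Type*} (A : V → V → Prop) : Prop :=
  ∀ (W : Type) (_ : Fintype W) (B : W → W → Prop), IsTournament B →
    copyCount A B = copyCount (fun a b => A b a) B

/-- Out-degree. -/
noncomputable def outDeg {V : Type*} (A : V → V → Prop) (u : V) : ℕ :=
  Nat.card {v // A u v}

/-- In-degree. -/
noncomputable def inDeg {V : Type*} (A : V → V → Prop) (u : V) : ℕ :=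
  Nat.card {v // A v u}

/-- The polynomial `P_D(x) = ∑_u (1+x)^{d⁺(u)} (1-x)^{d⁻(u)}`. -/
noncomputable def degPoly {V : Type*} [Fintype V] (A : V → V → Prop) : Polynomial ℤ :=
  ∑ u : V, (1 + X) ^ outDeg A u * (1 - X) ^ inDeg A u

/-- `A` is an orientation of the simple graph `G`. -/
def IsOrientation {V : Type*} (G : SimpleGraph V) (A : V → V → Prop) : Prop :=
  (∀ u v, A u v → ¬ A v u) ∧ ∀ u v, G.Adj u v ↔ (A u v ∨ A v u)

/-!
Let `T` be the tournament on `m + 3` vertices in which a transitive chain of length `m` dominates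
a directed triangle. An embedding of `D` into `T` leaves some arc `c → c + 1` of the triangle
unused; read along the chain and then around the triangle from `c + 1`, it becomes a topological
ordering of `D`, which together with `c` determines the embedding. Conversely, reversing a
topological ordering and folding its first three vertices `u, r, x` onto the triangle, in any of
its three rotations, embeds `−D`; this is where `u` being the unique source, with the single
out-neighbour `r`, is used. Hence `|Aut D| f_T(D) ≤ 3 · #orderings ≤ |Aut D| f_T(−D)`, and the
first inequality is strict: an ordering ending in two sinks, cut at `0`, comes from no embedding,
since the arc `2 → 0` would join those two sinks. For a tree oriented away from `u`, orderings
come from the depth `dist u`, which grows by one along every arc.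
-/

open Function

section Counting

variable {V W : Type*} (A : V → V → Prop) (B : W → W → Prop)

abbrev ArcEmbedding := {f : V ↪ W // ∀ a b, A a b → B (f a) (f b)}

abbrev Copy := {p : Set W × (W → W → Prop) //
    (∀ a b, p.2 a b → B a b ∧ a ∈ p.1 ∧ b ∈ p.1) ∧
    ∃ e : V ≃ p.1, ∀ a b, A a b ↔ p.2 (e a : W) (e b : W)}

variable {A B}

abbrev Copy.rel (p : Copy A B) : p.1.1 → p.1.1 → Prop := fun x y => p.1.2 x y

lemma Copy.eq_image (p : Copy A B) (e : A ≃r p.rel) :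
    p.1 = (Set.range (fun v => (e v : W)),
      Relation.Map A (fun v => (e v : W)) (fun v => (e v : W))) := by
  refine Prod.ext (Set.ext fun x => ⟨fun hx => ?_, ?_⟩)
    (funext₂ fun x y => propext ⟨fun h => ?_, ?_⟩)
  · obtain ⟨v, hv⟩ := e.surjective ⟨x, hx⟩
    exact ⟨v, congrArg Subtype.val hv⟩
  · rintro ⟨v, rfl⟩
    exact (e v).2
  · obtain ⟨-, hx, hy⟩ := p.2.1 x y h
    obtain ⟨a, ha⟩ := e.surjective ⟨x, hx⟩
    obtain ⟨b, hb⟩ := e.surjective ⟨y, hy⟩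
    refine ⟨a, b, e.map_rel_iff.1 ?_, congrArg Subtype.val ha, congrArg Subtype.val hb⟩
    simpa [Copy.rel, ha, hb] using h
  · rintro ⟨a, b, hab, rfl, rfl⟩
    exact e.map_rel_iff.2 hab

def Copy.toArcEmbedding (x : Σ p : Copy A B, A ≃r p.rel) : ArcEmbedding A B :=
  ⟨⟨fun v => x.2 v, Subtype.val_injective.comp x.2.injective⟩,
    fun _ _ h => (x.1.2.1 _ _ (x.2.map_rel_iff.2 h)).1⟩

lemma Copy.toArcEmbedding_bijective : Bijective (Copy.toArcEmbedding (A := A) (B := B)) := by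
  constructor
  · rintro ⟨p, e⟩ ⟨p', e'⟩ h
    have he : ∀ v, (e v : W) = e' v := fun v => congrArg (fun f : ArcEmbedding A B => f.1 v) h
    obtain rfl : p = p' := Subtype.ext <| by
      rw [p.eq_image e, p'.eq_image e']
      simp only [he]
    obtain rfl : e = e' := RelIso.ext fun v => Subtype.ext (he v)
    rfl
  · rintro ⟨f, hf⟩
    let e : V ≃ Set.range f := Equiv.ofInjective f f.injective
    have he : ∀ a b, A a b ↔ Relation.Map A f f (e a : W) (e b : W) := fun a b =>
      ⟨fun h => ⟨a, b, h, rfl, rfl⟩, fun ⟨a', b', h, ha, hb⟩ => by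
        rwa [← f.injective ha, ← f.injective hb]⟩
    refine ⟨⟨⟨(Set.range f, Relation.Map A f f), ?_, e, he⟩, ⟨e, (he _ _).symm⟩⟩, rfl⟩
    rintro _ _ ⟨a, b, h, rfl, rfl⟩
    exact ⟨hf a b h, ⟨a, rfl⟩, ⟨b, rfl⟩⟩

theorem card_arcEmbedding : Nat.card (ArcEmbedding A B) = copyCount A B * Nat.card (A ≃r A) := by
  have iso (p : Copy A B) : Nonempty (A ≃r p.rel) :=
    let ⟨e, he⟩ := p.2.2; ⟨⟨e, (he _ _).symm⟩⟩
  rw [← Nat.card_congr (Equiv.ofBijective _ Copy.toArcEmbedding_bijective), copyCount,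
    ← Nat.card_prod, Nat.card_congr ((Equiv.sigmaCongrRight fun p =>
      (RelIso.relIsoCongr (RelIso.refl A) (iso p).some).symm).trans (Equiv.sigmaEquivProd _ _))]

theorem card_arcEmbedding_swap_eq (h : copyCount A B = copyCount (swap A) B) :
    Nat.card (ArcEmbedding A B) = Nat.card (ArcEmbedding (swap A) B) := by
  rw [card_arcEmbedding, card_arcEmbedding, h]
  congr 1
  exact Nat.card_congr ⟨RelIso.swap, RelIso.swap, fun _ => rfl, fun _ => rfl⟩

end Counting

section ChainTriangle

variable (m : ℕ)

def chainTriangle : Fin m ⊕ ZMod 3 → Fin m ⊕ ZMod 3 → Prop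
  | .inl i, .inl j => i < j
  | .inl _, .inr _ => True
  | .inr _, .inl _ => False
  | .inr a, .inr b => b = a + 1

theorem isTournament_chainTriangle : IsTournament (chainTriangle m) := by
  refine ⟨?_, ?_⟩
  · rintro (i | a) <;> simp [chainTriangle]
  · have triangle : ∀ a b : ZMod 3, a ≠ b → (b = a + 1 ↔ ¬ a = b + 1) := by decide
    rintro (i | a) (j | b) hne <;> simp only [chainTriangle, not_lt, not_true, not_false_iff]
    · exact ⟨le_of_lt, fun h => lt_of_le_of_ne h (fun h => hne (by rw [h]))⟩
    · exact triangle a b (fun h => hne (by rw [h]))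

/-- The chain in order, then the triangle cut open at its arc `c → c + 1`: the positions
`m, m + 1, m + 2` hold `c + 1, c + 2, c`. -/
def cutPos (c : ZMod 3) : Fin m ⊕ ZMod 3 → Fin (m + 3)
  | .inl i => ⟨i, by omega⟩
  | .inr a => ⟨m + (a - c - 1).val, by have := (a - c - 1).val_lt; omega⟩

def revPos (c : ZMod 3) : Fin (m + 3) → Fin m ⊕ ZMod 3
  | ⟨0, _⟩ => .inr (c + 2)
  | ⟨1, _⟩ => .inr (c + 1)
  | ⟨2, _⟩ => .inr c
  | ⟨j + 3, _⟩ => .inl ⟨m - 1 - j, by omega⟩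

variable {m}

lemma cutPos_injective (c : ZMod 3) : Injective (cutPos m c) := by
  rintro (i | a) (j | b) h <;> simp only [cutPos, Fin.mk.injEq] at h
  · rw [Fin.ext h]
  · omega
  · omega
  · have key : ∀ a b c : ZMod 3, (a - c - 1).val = (b - c - 1).val → a = b := by decide
    rw [key a b c (by omega)]

lemma cutPos_lt {c : ZMod 3} {x y : Fin m ⊕ ZMod 3} (hxy : chainTriangle m x y)
    (hc : ¬ (x = .inr c ∧ y = .inr (c + 1))) : cutPos m c x < cutPos m c y := by
  rcases x with i | a <;> rcases y with j | b <;> simp only [chainTriangle] at hxy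
  · exact hxy
  · exact Fin.mk_lt_mk.2 (by omega)
  · subst hxy
    have key : ∀ a c : ZMod 3, a ≠ c → (a - c - 1).val < (a + 1 - c - 1).val := by decide
    exact Fin.mk_lt_mk.2 (Nat.add_lt_add_left (key a c fun h => hc (by rw [h]; exact ⟨rfl, rfl⟩)) m)

lemma cutPos_zero_inr_two : (cutPos m 0 (.inr 2) : ℕ) = m + 1 := rfl

lemma revPos_injective (c : ZMod 3) : Injective (revPos m c) := by
  rintro ⟨_ | _ | _ | i, hi⟩ ⟨_ | _ | _ | j, hj⟩ h <;>
    simp only [revPos, Sum.inr.injEq, Sum.inl.injEq, reduceCtorEq, Fin.mk.injEq] at h ⊢ <;>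
    first | omega | (revert h; revert c; decide)

lemma revPos_zero (c : ZMod 3) : revPos m c 0 = .inr (c + 2) := rfl

lemma chainTriangle_revPos (c : ZMod 3) {i j : Fin (m + 3)} (hij : i < j)
    (h02 : ¬ ((i : ℕ) = 0 ∧ (j : ℕ) = 2)) : chainTriangle m (revPos m c j) (revPos m c i) := by
  rcases i with ⟨_ | _ | _ | i, hi⟩ <;> rcases j with ⟨_ | _ | _ | j, hj⟩ <;>
    simp only [Fin.mk_lt_mk] at hij <;> simp [revPos, chainTriangle] at h02 ⊢ <;>
    first | omega | ring

end ChainTriangle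

lemma Nat.card_lt_card_of_injective_of_notMem {α β : Type*} [Finite β] {f : α → β}
    (hf : Injective f) {b : β} (hb : b ∉ Set.range f) : Nat.card α < Nat.card β :=
  lt_of_le_of_ne (Nat.card_le_card_of_injective f hf) fun h =>
    hb ((hf.bijective_of_nat_card_le h.ge).2 b)

section Comparison

variable {V : Type*} (A : V → V → Prop)

abbrev TopologicalOrdering (n : ℕ) := {π : V ↪ Fin n // ∀ a b, A a b → π a < π b}

def UsesArc {m : ℕ} (g : V → Fin m ⊕ ZMod 3) (c : ZMod 3) : Prop :=
  ∃ a b, A a b ∧ g a = .inr c ∧ g b = .inr (c + 1)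

open Classical in
noncomputable def cutArc {m : ℕ} (g : V → Fin m ⊕ ZMod 3) : ZMod 3 :=
  if UsesArc A g 1 then if UsesArc A g 2 then 0 else 2 else 1

variable {A} {m : ℕ} (hcyc : ∀ a b c, A a b → A b c → ¬ A c a)

include hcyc in
lemma not_usesArc_cutArc {g : V → Fin m ⊕ ZMod 3} (hg : Injective g) :
    ¬ UsesArc A g (cutArc A g) := by
  unfold cutArc
  split_ifs with h1 h2
  · rintro ⟨a, b, hab, ha, hb⟩
    obtain ⟨b', c, hbc, hb', hc⟩ := h1
    obtain ⟨c', a', hca, hc', ha'⟩ := h2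
    obtain rfl : b = b' := hg (hb.trans (by rw [hb']; rfl))
    obtain rfl : c = c' := hg (hc.trans (by rw [hc']; rfl))
    obtain rfl : a' = a := hg (ha'.trans (by rw [ha]; rfl))
    exact hcyc _ _ _ hab hbc hca
  · exact h2
  · exact h1

lemma usesArc_two_of_cutArc_eq_zero {g : V → Fin m ⊕ ZMod 3} (h : cutArc A g = 0) :
    UsesArc A g 2 := by
  unfold cutArc at h
  split_ifs at h with h1 h2
  · exact h2
  all_goals exact absurd h (by decide)

noncomputable def ArcEmbedding.cutOrdering (g : ArcEmbedding A (chainTriangle m)) :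
    TopologicalOrdering A (m + 3) :=
  ⟨g.1.trans ⟨cutPos m (cutArc A g.1), cutPos_injective _⟩, fun a b hab =>
    cutPos_lt (g.2 a b hab) fun ⟨ha, hb⟩ =>
      not_usesArc_cutArc hcyc g.1.injective ⟨a, b, hab, ha, hb⟩⟩

lemma ArcEmbedding.cutOrdering_injective :
    Injective fun g : ArcEmbedding A (chainTriangle m) => (g.cutOrdering hcyc, cutArc A g.1) := by
  intro g g' h
  have hc : cutArc A g.1 = cutArc A g'.1 := congrArg Prod.snd h
  refine Subtype.ext (Embedding.ext fun v => cutPos_injective (cutArc A g.1) ?_)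
  have : cutPos m (cutArc A g.1) (g.1 v) = cutPos m (cutArc A g'.1) (g'.1 v) :=
    congrArg (fun x => x.1.1 v) h
  rwa [← hc] at this

lemma ArcEmbedding.cutOrdering_ne {π₀ : TopologicalOrdering A (m + 3)}
    (hπ₀ : ∀ a b, A a b → (π₀.1 a : ℕ) ≤ m) (g : ArcEmbedding A (chainTriangle m)) :
    (g.cutOrdering hcyc, cutArc A g.1) ≠ (π₀, 0) := by
  intro h
  have hc : cutArc A g.1 = 0 := congrArg Prod.snd h
  -- the arc `2 → 0` used by `g` would start at position `m + 1`, where `π₀` has a sink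
  obtain ⟨a, b, hab, ha, -⟩ := usesArc_two_of_cutArc_eq_zero hc
  have := hπ₀ a b hab
  rw [← show g.cutOrdering hcyc = π₀ from congrArg Prod.fst h] at this
  change (cutPos m (cutArc A g.1) (g.1 a) : ℕ) ≤ m at this
  rw [hc, ha, cutPos_zero_inr_two] at this
  omega

lemma TopologicalOrdering.surjective [Fintype V] (hV : Fintype.card V = m + 3)
    (π : TopologicalOrdering A (m + 3)) : Surjective π.1 :=
  ((Fintype.bijective_iff_injective_and_card π.1).2 ⟨π.1.injective, by simp [hV]⟩).2

variable {u r : V} (hpar : ∀ v, v ≠ u → ∃ p, A p v)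
include hpar

lemma TopologicalOrdering.eq_of_apply_eq_zero {n : ℕ} (π : TopologicalOrdering A n) {v : V}
    (hv : (π.1 v : ℕ) = 0) : v = u := by
  by_contra h
  obtain ⟨p, hp⟩ := hpar v h
  have := π.2 p v hp
  omega

lemma TopologicalOrdering.apply_eq_zero [Fintype V] (hV : Fintype.card V = m + 3)
    (π : TopologicalOrdering A (m + 3)) : (π.1 u : ℕ) = 0 := by
  obtain ⟨v, hv⟩ := π.surjective hV ⟨0, by omega⟩
  obtain rfl := π.eq_of_apply_eq_zero hpar (v := v) (by simp [hv])
  simp [hv]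

lemma TopologicalOrdering.apply_eq_one [Fintype V] (hV : Fintype.card V = m + 3)
    (hu : ∀ v, A u v → v = r) (π : TopologicalOrdering A (m + 3)) : (π.1 r : ℕ) = 1 := by
  obtain ⟨y, hy⟩ := π.surjective hV ⟨1, by omega⟩
  obtain ⟨p, hp⟩ := hpar y fun h => by
    have := π.apply_eq_zero hpar hV
    rw [← h, hy] at this
    simp at this
  have hp1 : (π.1 p : ℕ) < 1 := by
    have := π.2 p y hp
    rw [hy] at this
    exact this
  obtain rfl := π.eq_of_apply_eq_zero hpar (v := p) (by omega)
  rw [← hu y hp, hy]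

def TopologicalOrdering.revEmbedding [Fintype V] (hV : Fintype.card V = m + 3)
    (hu : ∀ v, A u v → v = r) (π : TopologicalOrdering A (m + 3)) (c : ZMod 3) :
    ArcEmbedding (swap A) (chainTriangle m) :=
  ⟨π.1.trans ⟨revPos m c, revPos_injective c⟩, fun a b hab => by
    -- `π` puts `u` and `r` at positions `0` and `1`, so no arc joins positions `0` and `2`
    refine chainTriangle_revPos c (π.2 b a hab) fun ⟨hb, ha⟩ => ?_
    obtain rfl := π.eq_of_apply_eq_zero hpar hb
    rw [hu a hab, π.apply_eq_one hpar hV hu] at ha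
    omega⟩

lemma TopologicalOrdering.revEmbedding_injective [Fintype V] (hV : Fintype.card V = m + 3)
    (hu : ∀ v, A u v → v = r) :
    Injective fun πc : TopologicalOrdering A (m + 3) × ZMod 3 =>
      πc.1.revEmbedding hpar hV hu πc.2 := by
  rintro ⟨π, c⟩ ⟨π', c'⟩ h
  have hv v : revPos m c (π.1 v) = revPos m c' (π'.1 v) := congrArg (fun g => g.1 v) h
  obtain rfl : c = c' := by
    have h₀ : π.1 u = 0 := Fin.ext (π.apply_eq_zero hpar hV)
    have h₀' : π'.1 u = 0 := Fin.ext (π'.apply_eq_zero hpar hV)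
    have := hv u
    rw [h₀, h₀', revPos_zero, revPos_zero] at this
    exact add_right_cancel (Sum.inr_injective this)
  exact Prod.ext (Subtype.ext (Embedding.ext fun v => revPos_injective c (hv v))) rfl

include hcyc in
theorem card_arcEmbedding_lt_swap [Fintype V] (hV : Fintype.card V = m + 3)
    (hu : ∀ v, A u v → v = r) {π₀ : TopologicalOrdering A (m + 3)}
    (hπ₀ : ∀ a b, A a b → (π₀.1 a : ℕ) ≤ m) :
    Nat.card (ArcEmbedding A (chainTriangle m)) <
      Nat.card (ArcEmbedding (swap A) (chainTriangle m)) :=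
  calc _ < Nat.card (TopologicalOrdering A (m + 3) × ZMod 3) :=
        Nat.card_lt_card_of_injective_of_notMem (ArcEmbedding.cutOrdering_injective hcyc)
          (b := (π₀, 0)) fun ⟨g, hg⟩ => ArcEmbedding.cutOrdering_ne hcyc hπ₀ g hg
    _ ≤ _ := Nat.card_le_card_of_injective _ (TopologicalOrdering.revEmbedding_injective hpar hV hu)

end Comparison

section Existence

variable {V : Type*} [Fintype V] {A : V → V → Prop} {n : ℕ}

lemma exists_embedding_fin_of_lt (hV : Fintype.card V = n) (κ : V → ℕ) :
    ∃ π : V ↪ Fin n, ∀ a b, κ a < κ b → π a < π b := by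
  let e := Fintype.equivFin V
  let : LinearOrder V := LinearOrder.lift' (fun v => toLex (κ v, e v)) fun a b h =>
    e.injective (congrArg (fun x => (ofLex x).2) h)
  let σ := (Fintype.orderIsoFinOfCardEq V hV).symm
  refine ⟨σ.toEquiv.toEmbedding, fun a b h => σ.strictMono ?_⟩
  change toLex (κ a, e a) < toLex (κ b, e b)
  exact Prod.Lex.toLex_lt_toLex.2 (Or.inl h)

lemma exists_topologicalOrdering_sinks_last {m : ℕ} (hV : Fintype.card V = m + 3) (ρ : V → ℕ)
    (hρ : ∀ a b, A a b → ρ a < ρ b) {s₁ s₂ : V} (hs : s₁ ≠ s₂) (hs₁ : ∀ w, ¬ A s₁ w)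
    (hs₂ : ∀ w, ¬ A s₂ w) :
    ∃ π : TopologicalOrdering A (m + 3), ∀ a b, A a b → (π.1 a : ℕ) ≤ m := by
  classical
  -- lifting every sink above `sup ρ` keeps arcs increasing and puts `s₁, s₂` last
  let κ v := if ∃ w, A v w then ρ v else Finset.univ.sup ρ + 1
  have hκ {a b : V} (hab : A a b) : κ a = ρ a := if_pos ⟨b, hab⟩
  have hκsink {s : V} (hs : ∀ w, ¬ A s w) : κ s = Finset.univ.sup ρ + 1 :=
    if_neg fun ⟨w, hw⟩ => hs w hw
  have hρsup a : ρ a < Finset.univ.sup ρ + 1 :=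
    Nat.lt_succ_of_le (Finset.le_sup (Finset.mem_univ a))
  obtain ⟨π, hπ⟩ := exists_embedding_fin_of_lt hV κ
  refine ⟨⟨π, fun a b hab => hπ a b ?_⟩, fun a b hab => ?_⟩
  · rw [hκ hab]
    by_cases hb : ∃ w, A b w
    · obtain ⟨w, hw⟩ := hb
      rw [hκ hw]
      exact hρ a b hab
    · rw [hκsink (not_exists.1 hb)]
      exact hρsup a
  · have h₁ := hπ a s₁ (by rw [hκ hab, hκsink hs₁]; exact hρsup a)
    have h₂ := hπ a s₂ (by rw [hκ hab, hκsink hs₂]; exact hρsup a)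
    have h₁₂ : (π s₁ : ℕ) ≠ π s₂ := fun h => hs (π.injective (Fin.ext h))
    have := (π s₁).2
    have := (π s₂).2
    rw [Fin.lt_def] at h₁ h₂
    change (π a : ℕ) ≤ m
    omega

end Existence

section Degrees

variable {V : Type*} {A : V → V → Prop}

lemma inDeg_eq_zero_iff [Finite V] {v : V} : inDeg A v = 0 ↔ ∀ w, ¬ A w v := by
  simp [inDeg, Nat.card_eq_zero, isEmpty_subtype, not_infinite_iff_finite.2]

lemma inDeg_eq_one_iff {v : V} : inDeg A v = 1 ↔ ∃! p, A p v := by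
  rw [inDeg, Nat.card_eq_one_iff_exists]
  simp [ExistsUnique]

lemma outDeg_eq_zero_iff [Finite V] {v : V} : outDeg A v = 0 ↔ ∀ w, ¬ A v w :=
  inDeg_eq_zero_iff (A := swap A)

lemma outDeg_eq_one_iff {v : V} : outDeg A v = 1 ↔ ∃! w, A v w :=
  inDeg_eq_one_iff (A := swap A)

lemma IsOrientation.degree_eq [Fintype V] {G : SimpleGraph V} [DecidableRel G.Adj]
    (hA : IsOrientation G A) (v : V) : G.degree v = outDeg A v + inDeg A v := by
  classical
  have hdisj : Disjoint (A v) (fun w => A w v) :=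
    disjoint_iff_inf_le.2 fun w ⟨h₁, h₂⟩ => hA.1 v w h₁ h₂
  rw [← G.card_neighborSet_eq_degree, ← Nat.card_eq_fintype_card, outDeg, inDeg, ← Nat.card_sum]
  exact Nat.card_congr ((Equiv.subtypeEquivRight (hA.2 v)).trans (subtypeOrEquiv _ _ hdisj))

lemma sum_outDeg_eq_sum_inDeg [Fintype V] (A : V → V → Prop) :
    ∑ v, outDeg A v = ∑ v, inDeg A v := by
  classical
  simp only [outDeg, inDeg, Nat.card_eq_fintype_card, Fintype.card_subtype, Finset.card_filter]
  exact Finset.sum_comm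

end Degrees

section Tree

variable {V : Type*} {G : SimpleGraph V} {A : V → V → Prop}

lemma SimpleGraph.Connected.exists_adj_dist_add_one (hG : G.Connected) {u y : V} (hy : y ≠ u) :
    ∃ z, G.Adj z y ∧ G.dist u z + 1 = G.dist u y := by
  obtain ⟨p, hp⟩ := hG.exists_walk_length_eq_dist y u
  cases p with
  | nil => exact absurd rfl hy
  | cons h q =>
    refine ⟨_, h.symm, ?_⟩
    have hq := SimpleGraph.dist_le q
    rw [SimpleGraph.Walk.length_cons] at hp
    rw [SimpleGraph.dist_comm] at hp hq
    rcases h.symm.diff_dist_adj (u := u) with h' | h' | h' <;> omega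

theorem IsOrientation.dist_eq_add_one (hG : G.IsTree) (hA : IsOrientation G A) {u : V}
    (hu : ∀ w, ¬ A w u) (hpar : ∀ v, v ≠ u → ∃! p, A p v) {a b : V} (hab : A a b) :
    G.dist u b = G.dist u a + 1 := by
  -- an edge stepping away from `u` cannot point back to `y`, whose parent lies closer to `u`
  have away : ∀ k y v, G.dist u y = k → G.Adj y v → G.dist u v = k + 1 → A y v := by
    intro k
    induction k with
    | zero =>
      intro y v hy hyv _
      obtain rfl := (hG.connected.dist_eq_zero_iff.1 hy).symm
      exact ((hA.2 _ _).1 hyv).resolve_right (hu v)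
    | succ k ih =>
      intro y v hy hyv hv
      have hyu : y ≠ u := by rintro rfl; simp at hy
      obtain ⟨z, hzy, hz⟩ := hG.connected.exists_adj_dist_add_one hyu
      have hzy' : A z y := ih z y (by omega) hzy (by omega)
      refine ((hA.2 y v).1 hyv).resolve_right fun hvy => ?_
      obtain rfl := (hpar y hyu).unique hvy hzy'
      omega
  have hadj : G.Adj a b := (hA.2 a b).2 (Or.inl hab)
  rcases hG.dist_eq_dist_add_one_of_adj u hadj with h | h
  · exact absurd (away _ b a rfl hadj.symm h) (hA.1 a b hab)
  · exact h

end Tree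

section Main

variable {V : Type} [Fintype V] {A : V → V → Prop}

lemma two_le_card_sinks {u w : V} (hu : inDeg A u = 0) (haway : ∀ v, v ≠ u → inDeg A v = 1)
    (hw : 2 ≤ outDeg A w) : 2 ≤ (Finset.univ.filter (fun v => outDeg A v = 0)).card := by
  classical
  have hin : ∑ v, inDeg A v = (Finset.univ.filter (fun v => v ≠ u)).card := by
    rw [Finset.card_filter]
    exact Finset.sum_congr rfl fun v _ => by by_cases h : v = u <;> simp [h, hu, haway]
  have hout : (Finset.univ.filter (fun v => ¬ outDeg A v = 0)).card < ∑ v, outDeg A v := by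
    rw [Finset.card_filter]
    exact Finset.sum_lt_sum (fun v _ => by split_ifs <;> omega)
      ⟨w, Finset.mem_univ _, by split_ifs <;> omega⟩
  have hsplit := Finset.card_filter_add_card_filter_not (s := Finset.univ)
    (fun v => outDeg A v = 0)
  rw [sum_outDeg_eq_sum_inDeg, hin, Finset.filter_ne', Finset.card_erase_of_mem (Finset.mem_univ _)]
    at hout
  simp only [Finset.card_univ] at hsplit hout
  omega

theorem not_converseInvariant_of_isTree {G : SimpleGraph V} (hG : G.IsTree)
    (hA : IsOrientation G A) (hV : 3 ≤ Fintype.card V) {u r s₁ s₂ : V} (hsrc : ∀ w, ¬ A w u)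
    (hpar : ∀ v, v ≠ u → ∃! p, A p v) (hr : ∀ v, A u v → v = r) (hs : s₁ ≠ s₂)
    (hs₁ : ∀ w, ¬ A s₁ w) (hs₂ : ∀ w, ¬ A s₂ w) : ¬ ConverseInvariant A := by
  intro hCI
  have hV' : Fintype.card V = (Fintype.card V - 3) + 3 := by omega
  have hρ a b (hab : A a b) : G.dist u a < G.dist u b := by
    rw [hA.dist_eq_add_one hG hsrc hpar hab]
    omega
  obtain ⟨π₀, hπ₀⟩ := exists_topologicalOrdering_sinks_last hV' _ hρ hs hs₁ hs₂
  refine (card_arcEmbedding_lt_swap (fun a b c hab hbc hca => ?_) (fun v hv => (hpar v hv).exists)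
    hV' hr hπ₀).ne
    (card_arcEmbedding_swap_eq (hCI _ inferInstance _ (isTournament_chainTriangle _)))
  have := hρ a b hab
  have := hρ b c hbc
  have := hρ c a hca
  omega

end Main

theorem stmt_9_general {V : Type} [Fintype V]
    (G : SimpleGraph V) [DecidableRel G.Adj]
    (htree : G.IsTree) (hΔ : 3 ≤ G.maxDegree)
    (u : V) (hleaf : G.degree u = 1)
    (A : V → V → Prop) (hor : IsOrientation G A)
    (hu : inDeg A u = 0) (haway : ∀ v : V, v ≠ u → inDeg A v = 1) :
    Finset.univ.filter (fun v => inDeg A v = 0) = {u} ∧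
    outDeg A u = 1 ∧
    2 ≤ (Finset.univ.filter (fun v => outDeg A v = 0)).card ∧
    (∑ v ∈ Finset.univ.filter (fun v => inDeg A v = 0), 2 ^ outDeg A v <
      ∑ v ∈ Finset.univ.filter (fun v => outDeg A v = 0), 2 ^ inDeg A v) ∧
    ¬ ConverseInvariant A := by
  have hout : outDeg A u = 1 := by have := hor.degree_eq u; omega
  have hsources : Finset.univ.filter (fun v => inDeg A v = 0) = {u} := by
    ext v
    by_cases hv : v = u <;> simp [hv, hu, haway]
  have : Nonempty V := ⟨u⟩
  obtain ⟨w, hw⟩ := G.exists_maximal_degree_vertex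
  have hwu : w ≠ u := by rintro rfl; omega
  have hw2 : 2 ≤ outDeg A w := by have := hor.degree_eq w; have := haway w hwu; omega
  have hsinks := two_le_card_sinks hu haway hw2
  have hsink_ne {s} (hs : s ∈ Finset.univ.filter (fun v => outDeg A v = 0)) : s ≠ u := by
    rintro rfl; simp [hout] at hs
  refine ⟨hsources, hout, hsinks, ?_, ?_⟩
  · rw [hsources, Finset.sum_singleton, hout,
      Finset.sum_congr rfl fun s hs => by rw [haway s (hsink_ne hs)], Finset.sum_const]
    simp only [smul_eq_mul]
    omega
  · obtain ⟨s₁, hs₁, s₂, hs₂, hs⟩ := Finset.one_lt_card.1 hsinks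
    obtain ⟨r, -, hr⟩ := outDeg_eq_one_iff.1 hout
    exact not_converseInvariant_of_isTree htree hor (by have := G.degree_lt_card_verts w; omega)
      (inDeg_eq_zero_iff.1 hu) (fun v hv => inDeg_eq_one_iff.1 (haway v hv)) hr hs
      (outDeg_eq_zero_iff.1 (Finset.mem_filter.1 hs₁).2)
      (outDeg_eq_zero_iff.1 (Finset.mem_filter.1 hs₂).2)

/-- Orienting a tree of maximum degree at least 3 away from a leaf `u` gives a
non converse invariant orgraph: there is a unique source `u`, of out-degree 1,
at least two sinks, and the source sum is smaller than the sink sum. -/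
theorem stmt_9 {V : Type} [Fintype V] [DecidableEq V]
    (G : SimpleGraph V) [DecidableRel G.Adj]
    (htree : G.IsTree) (hΔ : 3 ≤ G.maxDegree)
    (u : V) (hleaf : G.degree u = 1)
    (A : V → V → Prop) (hor : IsOrientation G A)
    (hu : inDeg A u = 0) (haway : ∀ v : V, v ≠ u → inDeg A v = 1) :
    Finset.univ.filter (fun v => inDeg A v = 0) = {u} ∧
    outDeg A u = 1 ∧
    2 ≤ (Finset.univ.filter (fun v => outDeg A v = 0)).card ∧
    (∑ v ∈ Finset.univ.filter (fun v => inDeg A v = 0), 2 ^ outDeg A v <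
      ∑ v ∈ Finset.univ.filter (fun v => outDeg A v = 0), 2 ^ inDeg A v) ∧
    ¬ ConverseInvariant A :=
  stmt_9_general G htree hΔ u hleaf A hor hu haway
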